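/- arXiv:2512.10748 — 2 statements merged into one kernel-verified Lean document; each statement's English description precedes it below -/
import Mathlib

section
/- A functor G : C^I → C^I is well-founded if and only if the natural transformation ε_G : G↓ → G, with components (ε_{G,X})_i = (G t_{i,X})_i, is a natural isomorphism. -/
open CategoryTheory CategoryTheory.Limits

attribute [local instance] Classical.propDecidable

universe v u

variable {C : Type u} [Category.{v} C] {I : Type}

/-- The `j`-th component functor of the truncation functor `T_{<i}`:
the evaluation `pr_j` if `j < i`, and constant at the initial object otherwise. -/
noncomputable def truncComp [HasInitial C] (r : I → I → Prop) (i j : I) :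
    (I → C) ⥤ C :=
  if r j i then Pi.eval (fun _ : I => C) j else (Functor.const (I → C)).obj (⊥_ C)

/-- The truncation functor `T_{<i} : C^I ⥤ C^I`: `(T_{<i} X)_j = X_j` if `j < i`
and the initial object `0` otherwise. -/
noncomputable def trunc [HasInitial C] (r : I → I → Prop) (i : I) :
    (I → C) ⥤ (I → C) :=
  Functor.pi' (truncComp r i)

/-- The counit of the truncation comonad, as a natural transformation on the
`j`-th component: the identity (`eqToHom`) if `j < i`, and the unique morphism
out of the initial object otherwise. -/
noncomputable def truncCounitComp [HasInitial C] (r : I → I → Prop) (i j : I) :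
    truncComp (C := C) r i j ⟶ Pi.eval (fun _ : I => C) j :=
  if h : r j i then eqToHom (if_pos h)
  else eqToHom (if_neg h) ≫
    { app := fun X => initial.to (X j)
      naturality := by intros; exact initial.hom_ext _ _ }

/-- The counit `t_{i,X} : T_{<i} X ⟶ X`: the identity in components `j < i` and
the unique morphism `0 ⟶ X_j` otherwise. -/
noncomputable def truncCounit [HasInitial C] (r : I → I → Prop) (i : I)
    (X : I → C) : (trunc r i (C := C)).obj X ⟶ X := fun j =>
  (truncCounitComp r i j).app X

lemma truncCounit_naturality [HasInitial C] (r : I → I → Prop) (i : I)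
    {X Y : I → C} (f : X ⟶ Y) :
    (trunc r i).map f ≫ truncCounit r i Y = truncCounit r i X ≫ f := by
  funext j
  exact (truncCounitComp r i j).naturality f

/-- The well-founded coreflection `G↓` of a functor `G : C^I ⥤ C^I`:
`(G↓ X)_i = (G (T_{<i} X))_i`. -/
noncomputable def coreflection [HasInitial C] (r : I → I → Prop)
    (G : (I → C) ⥤ (I → C)) : (I → C) ⥤ (I → C) where
  obj X := fun i => (G.obj ((trunc r i).obj X)) i
  map {X Y} f := fun i => (G.map ((trunc r i).map f)) i
  map_id X := by funext i; simp
  map_comp {X Y Z} f g := by funext i; simp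

/-- The natural transformation `ε_G : G↓ ⟶ G` with components
`(ε_{G,X})_i = (G t_{i,X})_i`. -/
noncomputable def epsilonNat [HasInitial C] (r : I → I → Prop)
    (G : (I → C) ⥤ (I → C)) : coreflection r G ⟶ G where
  app X := fun i => (G.map (truncCounit r i X)) i
  naturality {X Y} f := by
    funext i
    have : (G.map ((trunc r i).map f) ≫ G.map (truncCounit r i Y)) i
        = (G.map (truncCounit r i X) ≫ G.map f) i := by
      rw [← G.map_comp, ← G.map_comp, truncCounit_naturality]
    exact this


/-- Extension functor from `C^{<i}` to `C^I`, padding with the initial object. -/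
noncomputable def extF [HasInitial C] (r : I → I → Prop) (i : I) :
    ({j : I // r j i} → C) ⥤ (I → C) where
  obj Y := fun j => if h : r j i then Y ⟨j, h⟩ else ⊥_ C
  map {Y Z} f := fun j =>
    if h : r j i then
      eqToHom (show (if h : r j i then Y ⟨j, h⟩ else ⊥_ C) = Y ⟨j, h⟩ by rw [dif_pos h])
        ≫ f ⟨j, h⟩ ≫
      eqToHom (show Z ⟨j, h⟩ = (if h : r j i then Z ⟨j, h⟩ else ⊥_ C) by rw [dif_pos h])
    else eqToHom (show (if h : r j i then Y ⟨j, h⟩ else ⊥_ C)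
      = (if h : r j i then Z ⟨j, h⟩ else ⊥_ C) by rw [dif_neg h, dif_neg h])
  map_id Y := by
    funext j
    by_cases h : r j i <;> simp [dif_pos, dif_neg, h]
  map_comp {Y Z W} f g := by
    funext j
    by_cases h : r j i <;> simp [dif_pos, dif_neg, h]

lemma eqToHom_comp_aux {D : Type u} [Category.{v} D] {A B A' B' A'' B'' : D} (g : A ⟶ B)
    (p : A'' = A) (q : B = B'') (a : A'' = A') (b : A' = A) (c : B = B') (d : B' = B'') :
    eqToHom p ≫ g ≫ eqToHom q = eqToHom a ≫ (eqToHom b ≫ g ≫ eqToHom c) ≫ eqToHom d := by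
  subst_vars; simp

lemma restr_extF_eq_trunc [HasInitial C] (r : I → I → Prop) (i : I) :
    Functor.pi' (fun j : {j : I // r j i} => Pi.eval (fun _ : I => C) j.1) ⋙ extF r i
      = trunc r i := by
  have hobj : ∀ X : I → C,
      (Functor.pi' (fun j : {j : I // r j i} => Pi.eval (fun _ : I => C) j.1)
        ⋙ extF r i).obj X = (trunc r i).obj X := by
    intro X
    funext j
    by_cases h : r j i
    · have ht : truncComp (C := C) r i j = Pi.eval (fun _ : I => C) j := if_pos h
      simp [extF, trunc, dif_pos h, Functor.congr_obj ht X]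
    · have ht : truncComp (C := C) r i j
          = (Functor.const (I → C)).obj (⊥_ C) := if_neg h
      simp [extF, trunc, dif_neg h, Functor.congr_obj ht X]
  refine CategoryTheory.Functor.ext hobj (fun X Y f => ?_)
  funext j
  show _ = (eqToHom (hobj X) j) ≫ ((trunc r i).map f j) ≫ (eqToHom (hobj Y).symm j)
  rw [Functor.eqToHom_proj, Functor.eqToHom_proj]
  by_cases h : r j i
  · have ht : truncComp (C := C) r i j = Pi.eval (fun _ : I => C) j := if_pos h
    simp [extF, trunc, dif_pos h, Functor.congr_hom ht f]
    exact eqToHom_comp_aux _ _ _ _ _ _ _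
  · have ht : truncComp (C := C) r i j
        = (Functor.const (I → C)).obj (⊥_ C) := if_neg h
    simp [extF, trunc, dif_neg h, Functor.congr_hom ht f]
    erw [eqToHom_trans, eqToHom_trans]

/-- A functor `G : C^I ⥤ C^I` is well-founded (for each `i`,
`pr_i ∘ G` factors through `pr_{<i}` up to natural isomorphism) if and only if
the natural transformation `ε_G : G↓ ⟶ G`, with components
`(ε_{G,X})_i = (G t_{i,X})_i`, is a natural isomorphism. -/
theorem stmt_3 {C : Type u} [Category.{v} C] [HasCoproducts.{0} C] [HasInitial C]
    {I : Type} (r : I → I → Prop) (hwf : WellFounded r)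
    (G : (I → C) ⥤ (I → C)) :
    (∀ i : I, ∃ Gi : ({j : I // r j i} → C) ⥤ C,
      Nonempty (G ⋙ Pi.eval (fun _ : I => C) i ≅
        Functor.pi' (fun j : {j : I // r j i} => Pi.eval (fun _ : I => C) j.1) ⋙ Gi))
    ↔ IsIso (epsilonNat r G) := by
  constructor
  · intro hwfG
    have key : ∀ X, IsIso ((epsilonNat r G).app X) := by
      intro X
      rw [isIso_pi_iff]
      intro i
      obtain ⟨Gi, ⟨φ⟩⟩ := hwfG i
      have hc : ((epsilonNat r G).app X) i
          = (G ⋙ Pi.eval (fun _ : I => C) i).map (truncCounit r i X) := rfl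
      rw [hc]
      refine (NatIso.isIso_map_iff φ (truncCounit r i X)).mpr ?_
      have hres : IsIso ((Functor.pi'
          (fun j : {j : I // r j i} => Pi.eval (fun _ : I => C) j.1)).map
            (truncCounit r i X)) := by
        rw [isIso_pi_iff]
        rintro ⟨j, hj⟩
        show IsIso (truncCounit r i X j)
        have : truncCounit r i X j = (truncCounitComp r i j).app X := rfl
        rw [this, truncCounitComp, dif_pos hj]
        exact NatIso.isIso_app_of_isIso (eqToIso (if_pos hj)).hom X
      rw [Functor.comp_map]
      exact inferInstance
    exact NatIso.isIso_of_isIso_app _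
  · intro hiso i
    refine ⟨extF r i ⋙ G ⋙ Pi.eval (fun _ : I => C) i, ⟨?_⟩⟩
    have h1 : Functor.pi' (fun j : {j : I // r j i} => Pi.eval (fun _ : I => C) j.1) ⋙
        (extF r i ⋙ G ⋙ Pi.eval (fun _ : I => C) i)
        = coreflection r G ⋙ Pi.eval (fun _ : I => C) i := by
      show (Functor.pi' (fun j : {j : I // r j i} => Pi.eval (fun _ : I => C) j.1) ⋙
        extF r i) ⋙ (G ⋙ Pi.eval (fun _ : I => C) i) = _
      rw [restr_extF_eq_trunc]
      rfl
    exact Functor.isoWhiskerRight (asIso (epsilonNat r G)).symm (Pi.eval (fun _ : I => C) i)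
      ≪≫ eqToIso h1.symm
end

section
/- If ε_G : G↓ → G is componentwise monic, then ε_G is co-universal among well-founded functors: for every well-founded functor H : C^I → C^I and natural transformation α : H → G there is a unique natural transformation ᾱ : H → G↓ with α = ε_G ∘ ᾱ. -/
open CategoryTheory CategoryTheory.Limits

attribute [local instance] Classical.propDecidable

universe v u

variable {C : Type u} [Category.{v} C] {I : Type}

lemma hmap_component_iso [HasInitial C] (r : I → I → Prop)
    (H : (I → C) ⥤ (I → C))
    (hH : ∀ i : I, ∃ Hi : ({j : I // r j i} → C) ⥤ C,
      Nonempty (H ⋙ Pi.eval (fun _ : I => C) i ≅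
        Functor.pi' (fun j : {j : I // r j i} => Pi.eval (fun _ : I => C) j.1) ⋙ Hi))
    (X : I → C) (i : I) :
    IsIso ((H.map (truncCounit r i X)) i) := by
  obtain ⟨Hi, ⟨e⟩⟩ := hH i
  set res := Functor.pi' (fun j : {j : I // r j i} => Pi.eval (fun _ : I => C) j.1)
  have h1 : IsIso (res.map (truncCounit r i X)) := by
    have hcomp : ∀ j : {j : I // r j i}, IsIso ((res.map (truncCounit r i X)) j) := by
      intro j
      have hj : IsIso (truncCounitComp (C := C) r i j.1) := by
        rw [truncCounitComp, dif_pos j.2]; exact (eqToIso (if_pos j.2)).isIso_hom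
      show IsIso ((truncCounitComp (C := C) r i j.1).app X)
      infer_instance
    exact ⟨⟨fun j => inv ((res.map (truncCounit r i X)) j),
      funext fun j => IsIso.hom_inv_id _, funext fun j => IsIso.inv_hom_id _⟩⟩
  have h1' : IsIso ((res ⋙ Hi).map (truncCounit r i X)) := by
    show IsIso (Hi.map (res.map (truncCounit r i X)))
    infer_instance
  have key : (H.map (truncCounit r i X)) i
      = e.hom.app ((trunc r i).obj X) ≫ (res ⋙ Hi).map (truncCounit r i X) ≫ e.inv.app X := by
    rw [← Category.assoc, ← e.hom.naturality (truncCounit r i X), Category.assoc,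
      Iso.hom_inv_id_app, Category.comp_id]
    rfl
  rw [key]; exact @IsIso.comp_isIso _ _ _ _ _ _ _ (e.app ((trunc r i).obj X)).isIso_hom (@IsIso.comp_isIso _ _ _ _ _ _ _ h1' (e.app X).isIso_inv)

/-- If `ε_G : G↓ ⟶ G` is componentwise monic, then `ε_G` is
co-universal among well-founded functors: for every well-founded functor
`H : C^I ⥤ C^I` and every natural transformation `α : H ⟶ G` there is a unique
natural transformation `ᾱ : H ⟶ G↓` with `α = ε_G ∘ ᾱ`. -/
theorem stmt_4 {C : Type u} [Category.{v} C] [HasCoproducts.{0} C] [HasInitial C]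
    {I : Type} (r : I → I → Prop) (hwf : WellFounded r)
    (G : (I → C) ⥤ (I → C))
    (hmono : ∀ (X : I → C) (i : I), Mono ((epsilonNat r G).app X i))
    (H : (I → C) ⥤ (I → C))
    (hH : ∀ i : I, ∃ Hi : ({j : I // r j i} → C) ⥤ C,
      Nonempty (H ⋙ Pi.eval (fun _ : I => C) i ≅
        Functor.pi' (fun j : {j : I // r j i} => Pi.eval (fun _ : I => C) j.1) ⋙ Hi))
    (α : H ⟶ G) :
    ∃! αbar : H ⟶ coreflection r G, αbar ≫ epsilonNat r G = α := by
  have hiso : ∀ (X : I → C) (i : I), IsIso ((H.map (truncCounit r i X)) i) :=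
    fun X i => hmap_component_iso r H hH X i
  -- componentwise naturality of α
  have αnat : ∀ {X Y : I → C} (f : X ⟶ Y) (i : I),
      (H.map f) i ≫ α.app Y i = α.app X i ≫ (G.map f) i := by
    intro X Y f i
    exact congrFun (α.naturality f) i
  -- the candidate component
  have comp_eps : ∀ (X : I → C) (i : I),
      (inv ((H.map (truncCounit r i X)) i) ≫ α.app ((trunc r i).obj X) i)
        ≫ (epsilonNat r G).app X i = α.app X i := by
    intro X i
    have := αnat (truncCounit r i X) i
    show (inv ((H.map (truncCounit r i X)) i) ≫ α.app ((trunc r i).obj X) i)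
        ≫ (G.map (truncCounit r i X)) i = α.app X i
    rw [Category.assoc, ← this, IsIso.inv_hom_id_assoc]
  have nat_key : ∀ {X Y : I → C} (f : X ⟶ Y) (i : I),
      (H.map f) i ≫ (inv ((H.map (truncCounit r i Y)) i) ≫ α.app ((trunc r i).obj Y) i)
        = (inv ((H.map (truncCounit r i X)) i) ≫ α.app ((trunc r i).obj X) i)
          ≫ (G.map ((trunc r i).map f)) i := by
    intro X Y f i
    have hm : Mono ((G.map (truncCounit r i Y)) i) := hmono Y i
    rw [← cancel_mono ((G.map (truncCounit r i Y)) i)]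
    have h2 : (G.map ((trunc r i).map f)) i ≫ (G.map (truncCounit r i Y)) i
        = (G.map (truncCounit r i X)) i ≫ (G.map f) i := by
      have h3 : (G.map ((trunc r i).map f) ≫ G.map (truncCounit r i Y)) i
          = (G.map (truncCounit r i X) ≫ G.map f) i := by
        rw [← G.map_comp, ← G.map_comp, truncCounit_naturality]
      exact h3
    simp only [Category.assoc]
    rw [← αnat (truncCounit r i Y) i, IsIso.inv_hom_id_assoc, αnat f i, h2,
      ← Category.assoc (α.app ((trunc r i).obj X) i), ← αnat (truncCounit r i X) i,
      Category.assoc, IsIso.inv_hom_id_assoc]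
  refine ⟨{ app := fun X i => inv ((H.map (truncCounit r i X)) i) ≫ α.app ((trunc r i).obj X) i
            naturality := fun {X Y} f => funext fun i => nat_key f i }, ?_, ?_⟩
  · ext X i
    exact comp_eps X i
  · intro β hβ
    ext X i
    show β.app X i = inv ((H.map (truncCounit r i X)) i) ≫ α.app ((trunc r i).obj X) i
    have hm : Mono ((epsilonNat r G).app X i) := hmono X i
    refine (cancel_mono ((epsilonNat r G).app X i)).1 ?_
    exact (congrFun (congrArg (fun t => NatTrans.app t X) hβ) i).trans (comp_eps X i).symm
end
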